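/- arXiv:1909.07905 — 2 statements merged into one kernel-verified Lean document; each statement's English description precedes it below -/
import Mathlib

section
/- If μ is a B-measure on the boundary of an origin-symmetric planar convex body K, then the support of μ is contained in the set of Auerbach points of K. -/
open Set MeasureTheory Pointwise

abbrev Plane := ℝ × ℝ

/-- An origin-symmetric convex body in the plane: compact, convex,
nonempty interior, symmetric about the origin. -/
def IsSymmConvexBody (K : Set Plane) : Prop :=
  Convex ℝ K ∧ IsCompact K ∧ (interior K).Nonempty ∧ K = -K

/-- Birkhoff orthogonality with respect to the norm induced by `K`
(whose Minkowski functional is `gauge K`). -/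
def BOrth (K : Set Plane) (x y : Plane) : Prop :=
  ∀ t : ℝ, gauge K x ≤ gauge K (x + t • y)

/-- The set of Auerbach points of `K`. -/
def Auerbach (K : Set Plane) : Set Plane :=
  {x | x ∈ frontier K ∧ ∃ y ∈ frontier K, BOrth K x y ∧ BOrth K y x}

/-- `E(K)`: the union of the open non-degenerate segments contained in `∂K`. -/
def SegUnion (K : Set Plane) : Set Plane :=
  {x | ∃ a b : Plane, a ≠ b ∧ segment ℝ a b ⊆ frontier K ∧ x ∈ openSegment ℝ a b}

/-- A closed antipode-free arc of `∂K` with endpoints `x` and `y`: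
a closed connected subset of `∂K` containing `x` and `y`, containing no
pair of antipodal points, and minimal with these properties. -/
def IsBArc (K C : Set Plane) (x y : Plane) : Prop :=
  C ⊆ frontier K ∧ IsClosed C ∧ IsPreconnected C ∧ x ∈ C ∧ y ∈ C ∧
  (∀ z ∈ C, -z ∉ C) ∧
  ∀ C' ⊆ C, IsClosed C' → IsPreconnected C' → x ∈ C' → y ∈ C' → C' = C

/-- An angular measure on `∂K`. -/
def IsAngularMeasure (K : Set Plane) (μ : Measure Plane) : Prop :=
  μ (frontier K) = ENNReal.ofReal (2 * Real.pi) ∧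
  μ (frontier K)ᶜ = 0 ∧
  (∀ X : Set Plane, μ (-X) = μ X) ∧
  (∀ x : Plane, μ {x} = 0)

/-- A B-measure: an angular measure giving `π/2` to every closed
antipode-free arc whose endpoints are Birkhoff orthogonal. -/
def IsBMeasure (K : Set Plane) (μ : Measure Plane) : Prop :=
  IsAngularMeasure K μ ∧
  ∀ C x y, IsBArc K C x y → BOrth K x y → μ C = ENNReal.ofReal (Real.pi / 2)

/-- The support of a Borel measure: the points all of whose open
neighborhoods have positive measure. -/
def msupp {α : Type*} [TopologicalSpace α] [MeasurableSpace α]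
    (μ : Measure α) : Set α :=
  {x | ∀ U : Set α, IsOpen U → x ∈ U → 0 < μ U}

/-!
Parametrize `∂K` by the angle of the ray from the origin, so that closed arcs of `∂K` are
images of intervals. A B-measure gives each half-boundary `[θ, θ + π]` mass `π` (by symmetry)
and each arc `[θ, β]` with `θ ⊣ β` mass `π/2`. So a chain `θ ⊣ β ⊣ γ` spans mass `π`, and
comparing it with `[θ, θ + π]` and its antipodal arc shows that an arc on one side of `θ` is
null, unless `γ = θ + π`, in which case `θ` is Auerbach. A backward chain `δ ⊣ α ⊣ θ` behaves
in the same way. Finally, `x ⊣ y` means that the line `x + ℝ y` supports `K`, and the support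
lines of two strictly nested orthogonal arcs are incompatible; this rules out the cases where
the forward and the backward chain at a non-Auerbach point make the same side null. Hence a
neighbourhood of the point is null, and it lies outside the support.
-/

open Real Topology

namespace IsSymmConvexBody

variable {K : Set Plane} {x y : Plane}

theorem convex (hK : IsSymmConvexBody K) : Convex ℝ K := hK.1

theorem isCompact (hK : IsSymmConvexBody K) : IsCompact K := hK.2.1

theorem interior_nonempty (hK : IsSymmConvexBody K) : (interior K).Nonempty := hK.2.2.1

theorem neg_mem (hK : IsSymmConvexBody K) (hx : x ∈ K) : -x ∈ K := by
  rwa [hK.2.2.2, Set.neg_mem_neg]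

theorem zero_mem_interior (hK : IsSymmConvexBody K) : (0 : Plane) ∈ interior K := by
  obtain ⟨x, hx⟩ := hK.interior_nonempty
  have hnx : -x ∈ interior K := by
    have h : interior (-K) = -interior K := ((Homeomorph.neg Plane).preimage_interior K).symm
    rwa [hK.2.2.2, h, Set.neg_mem_neg]
  simpa using hK.convex.interior.midpoint_mem hx hnx

theorem mem_nhds_zero (hK : IsSymmConvexBody K) : K ∈ 𝓝 (0 : Plane) :=
  mem_interior_iff_mem_nhds.1 hK.zero_mem_interior

theorem gauge_neg (hK : IsSymmConvexBody K) (x : Plane) : gauge K (-x) = gauge K x :=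
  _root_.gauge_neg (fun _ ↦ hK.neg_mem) x

theorem gauge_pos (hK : IsSymmConvexBody K) (hx : x ≠ 0) : 0 < gauge K x :=
  (_root_.gauge_pos (absorbent_nhds_zero hK.mem_nhds_zero)
    (NormedSpace.isVonNBounded_iff ℝ |>.2 hK.isCompact.isBounded)).2 hx

theorem gauge_eq_one_iff (hK : IsSymmConvexBody K) : gauge K x = 1 ↔ x ∈ frontier K :=
  gauge_eq_one_iff_mem_frontier hK.convex hK.mem_nhds_zero

theorem mem_iff_gauge_le_one (hK : IsSymmConvexBody K) : x ∈ K ↔ gauge K x ≤ 1 := by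
  rw [gauge_le_one_iff_mem_closure hK.convex hK.mem_nhds_zero, hK.isCompact.isClosed.closure_eq]

end IsSymmConvexBody

namespace Plane

def cross (u v : Plane) : ℝ := u.1 * v.2 - u.2 * v.1

variable {u v w : Plane}

@[simp] theorem cross_self (u : Plane) : cross u u = 0 := by unfold cross; ring

@[simp] theorem cross_zero_left (v : Plane) : cross 0 v = 0 := by simp [cross]

theorem cross_add_left (u w v : Plane) : cross (u + w) v = cross u v + cross w v := by
  simp only [cross, Prod.fst_add, Prod.snd_add]; ring

theorem cross_smul_left (c : ℝ) (u v : Plane) : cross (c • u) v = c * cross u v := by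
  simp only [cross, Prod.smul_fst, Prod.smul_snd, smul_eq_mul]; ring

theorem cross_smul_right (c : ℝ) (u v : Plane) : cross u (c • v) = c * cross u v := by
  simp only [cross, Prod.smul_fst, Prod.smul_snd, smul_eq_mul]; ring

theorem cross_neg_left (u v : Plane) : cross (-u) v = -cross u v := by
  simp only [cross, Prod.fst_neg, Prod.snd_neg]; ring

theorem cross_anticomm (u v : Plane) : cross v u = -cross u v := by unfold cross; ring

theorem exists_eq_smul_of_cross_eq_zero (hv : v ≠ 0) (h : cross w v = 0) :
    ∃ t : ℝ, w = t • v := by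
  have hpos : 0 < v.1 ^ 2 + v.2 ^ 2 := by
    by_contra! hle
    have h1 : v.1 = 0 := by nlinarith [sq_nonneg v.1, sq_nonneg v.2]
    have h2 : v.2 = 0 := by nlinarith [sq_nonneg v.1, sq_nonneg v.2]
    exact hv (Prod.ext h1 h2)
  unfold cross at h
  refine ⟨(w.1 * v.1 + w.2 * v.2) / (v.1 ^ 2 + v.2 ^ 2), Prod.ext ?_ ?_⟩ <;>
    simp only [Prod.smul_fst, Prod.smul_snd, smul_eq_mul] <;> field_simp
  · linear_combination v.2 * h
  · linear_combination -v.1 * h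

theorem _root_.ContinuousLinearMap.eq_cross (f : Plane →L[ℝ] ℝ) (z : Plane) :
    f z = cross z (-f (0, 1), f (1, 0)) := by
  have hz : z = z.1 • ((1 : ℝ), (0 : ℝ)) + z.2 • ((0 : ℝ), (1 : ℝ)) := by ext <;> simp
  conv_lhs => rw [hz]
  simp only [map_add, map_smul, smul_eq_mul, cross]
  ring

end Plane

open Plane

section BOrth

variable {K : Set Plane} {x y : Plane}

theorem BOrth.smul_right (h : BOrth K x y) (c : ℝ) : BOrth K x (c • y) := fun t ↦ by
  simpa [smul_smul] using h (t * c)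

theorem BOrth.neg_left (h : BOrth K x y) (hK : IsSymmConvexBody K) : BOrth K (-x) y := fun t ↦ by
  rw [show -x + t • y = -(x + (-t) • y) by module, hK.gauge_neg, hK.gauge_neg]
  exact h (-t)

end BOrth

namespace IsSymmConvexBody

variable {K : Set Plane} {x y : Plane}

/-- The line `x + ℝ y` misses `interior K`, hence supports `K`. -/
theorem cross_le_of_bOrth (hK : IsSymmConvexBody K) (hx : x ∈ frontier K)
    (hxy : 0 < cross x y) (h : BOrth K x y) {z : Plane} (hz : z ∈ K) :
    cross z y ≤ cross x y := by
  by_contra! hlt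
  have hzy : 0 < cross z y := hxy.trans hlt
  set s := cross x y / cross z y
  have hs0 : 0 < s := div_pos hxy hzy
  have hs1 : s < 1 := (div_lt_one hzy).2 hlt
  have hy : y ≠ 0 := by rintro rfl; simp [cross] at hxy
  obtain ⟨t, ht⟩ : ∃ t : ℝ, s • z - x = t • y := by
    refine exists_eq_smul_of_cross_eq_zero hy ?_
    rw [sub_eq_add_neg, cross_add_left, cross_smul_left, cross_neg_left,
      div_mul_cancel₀ _ hzy.ne', add_neg_cancel]
  have hgauge := h t
  rw [hK.gauge_eq_one_iff.2 hx, show x + t • y = s • z by rw [← ht]; abel,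
    gauge_smul_of_nonneg hs0.le, smul_eq_mul] at hgauge
  nlinarith [hK.mem_iff_gauge_le_one.1 hz]

theorem one_le_gauge_of_cross_le (hK : IsSymmConvexBody K) (hxy : 0 < cross x y)
    (h : ∀ z ∈ K, cross z y ≤ cross x y) (t : ℝ) : 1 ≤ gauge K (x + t • y) := by
  set w := x + t • y
  have hw : cross w y = cross x y := by simp [w, cross_add_left, cross_smul_left]
  by_contra! hlt
  have hw0 : w ≠ 0 := by rintro h0; rw [h0, cross_zero_left] at hw; linarith
  have hg := hK.gauge_pos hw0
  have hmem : (gauge K w)⁻¹ • w ∈ K := by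
    rw [hK.mem_iff_gauge_le_one, gauge_smul_of_nonneg (inv_nonneg.2 hg.le), smul_eq_mul,
      inv_mul_cancel₀ hg.ne']
  have hle := h _ hmem
  rw [cross_smul_left, hw] at hle
  nlinarith [(one_lt_inv₀ hg).2 hlt]

theorem exists_cross_le_of_mem_frontier (hK : IsSymmConvexBody K) (hx : x ∈ frontier K) :
    ∃ y, 0 < cross x y ∧ ∀ z ∈ K, cross z y ≤ cross x y := by
  rw [hK.isCompact.isClosed.frontier_eq] at hx
  obtain ⟨f, hf⟩ := geometric_hahn_banach_open_point hK.convex.interior isOpen_interior hx.2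
  refine ⟨(-f (0, 1), f (1, 0)), ?_, fun z hz ↦ ?_⟩
  · simpa [← f.eq_cross] using hf 0 hK.zero_mem_interior
  · rw [← f.eq_cross, ← f.eq_cross]
    have hz' : z ∈ closure (interior K) := by
      rwa [hK.convex.closure_interior_eq_closure_of_nonempty_interior hK.interior_nonempty,
        hK.isCompact.isClosed.closure_eq]
    exact closure_minimal (fun w hw ↦ (hf w hw).le) (isClosed_le f.continuous continuous_const) hz'

theorem mem_frontier_and_bOrth_of_cross_le (hK : IsSymmConvexBody K) (hx : x ∈ K)
    (hxy : 0 < cross x y) (h : ∀ z ∈ K, cross z y ≤ cross x y) :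
    x ∈ frontier K ∧ BOrth K x y := by
  have hge := hK.one_le_gauge_of_cross_le hxy h
  have hx1 : gauge K x = 1 :=
    le_antisymm (hK.mem_iff_gauge_le_one.1 hx) (by simpa using hge 0)
  exact ⟨hK.gauge_eq_one_iff.1 hx1, fun t ↦ hx1 ▸ hge t⟩

end IsSymmConvexBody

namespace Plane

noncomputable def unitVec (θ : ℝ) : Plane := (cos θ, sin θ)

theorem continuous_unitVec : Continuous unitVec := by unfold unitVec; fun_prop

theorem unitVec_add_pi (θ : ℝ) : unitVec (θ + π) = -unitVec θ := by
  simp [unitVec, cos_add_pi, sin_add_pi]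

theorem unitVec_sub_pi (θ : ℝ) : unitVec (θ - π) = -unitVec θ := by
  rw [← neg_neg (unitVec (θ - π)), ← unitVec_add_pi, sub_add_cancel]

theorem cross_unitVec (s t : ℝ) : cross (unitVec s) (unitVec t) = sin (t - s) := by
  simp only [cross, unitVec, sin_sub]; ring

theorem unitVec_ne_zero (θ : ℝ) : unitVec θ ≠ 0 := fun h ↦ by
  simpa [h] using cross_unitVec θ (θ + π / 2)

theorem unitVec_toIcoMod (a θ : ℝ) : unitVec (toIcoMod two_pi_pos a θ) = unitVec θ := by
  rw [← self_sub_toIcoDiv_zsmul two_pi_pos a θ, zsmul_eq_mul, unitVec, unitVec,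
    cos_sub_int_mul_two_pi, sin_sub_int_mul_two_pi]

theorem exists_pos_smul_unitVec {v : Plane} (hv : v ≠ 0) (a : ℝ) :
    ∃ θ ∈ Ico a (a + 2 * π), ∃ c : ℝ, 0 < c ∧ v = c • unitVec θ := by
  set z : ℂ := ⟨v.1, v.2⟩
  have hz : z ≠ 0 := fun h ↦ hv (Prod.ext (congrArg Complex.re h) (congrArg Complex.im h))
  refine ⟨toIcoMod two_pi_pos a z.arg, toIcoMod_mem_Ico _ _ _, ‖z‖, norm_pos_iff.2 hz, ?_⟩
  rw [unitVec_toIcoMod]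
  ext
  · simp [unitVec, Complex.norm_mul_cos_arg, z]
  · simp [unitVec, Complex.norm_mul_sin_arg, z]

theorem exists_pos_smul_unitVec_of_cross_pos {θ : ℝ} {v : Plane}
    (h : 0 < cross (unitVec θ) v) : ∃ β ∈ Ioo θ (θ + π), ∃ c : ℝ, 0 < c ∧ v = c • unitVec β := by
  have hv : v ≠ 0 := by rintro rfl; simp [cross] at h
  obtain ⟨β, hβ, c, hc, rfl⟩ := exists_pos_smul_unitVec hv (θ - π)
  rw [cross_smul_right, cross_unitVec] at h
  have hsin : 0 < sin (β - θ) := pos_of_mul_pos_right h hc.le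
  refine ⟨β, ⟨?_, by linarith [hβ.2]⟩, c, hc, rfl⟩
  by_contra! hle
  linarith [sin_nonpos_of_nonpos_of_neg_pi_le (x := β - θ) (by linarith) (by linarith [hβ.1])]

end Plane

noncomputable def radialFn (K : Set Plane) (θ : ℝ) : ℝ := (gauge K (unitVec θ))⁻¹

noncomputable def boundaryPt (K : Set Plane) (θ : ℝ) : Plane := radialFn K θ • unitVec θ

theorem cross_boundaryPt (K : Set Plane) (s t : ℝ) :
    cross (boundaryPt K s) (boundaryPt K t) = radialFn K s * radialFn K t * sin (t - s) := by
  rw [boundaryPt, boundaryPt, cross_smul_left, cross_smul_right, cross_unitVec]; ring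

namespace IsSymmConvexBody

variable {K : Set Plane} {x : Plane} {s t θ : ℝ}

theorem ne_zero_of_mem_frontier (hK : IsSymmConvexBody K) (hx : x ∈ frontier K) : x ≠ 0 := by
  rintro rfl
  simpa using hK.gauge_eq_one_iff.2 hx

theorem radialFn_pos (hK : IsSymmConvexBody K) (θ : ℝ) : 0 < radialFn K θ :=
  inv_pos.2 (hK.gauge_pos (unitVec_ne_zero θ))

theorem continuous_boundaryPt (hK : IsSymmConvexBody K) : Continuous (boundaryPt K) :=
  (((continuous_gauge hK.convex hK.mem_nhds_zero).comp continuous_unitVec).inv₀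
    fun θ ↦ (hK.gauge_pos (unitVec_ne_zero θ)).ne').smul continuous_unitVec

theorem gauge_boundaryPt (hK : IsSymmConvexBody K) (θ : ℝ) : gauge K (boundaryPt K θ) = 1 := by
  rw [boundaryPt, gauge_smul_of_nonneg (hK.radialFn_pos θ).le, smul_eq_mul, radialFn,
    inv_mul_cancel₀ (hK.gauge_pos (unitVec_ne_zero θ)).ne']

theorem boundaryPt_mem_frontier (hK : IsSymmConvexBody K) (θ : ℝ) :
    boundaryPt K θ ∈ frontier K :=
  hK.gauge_eq_one_iff.1 (hK.gauge_boundaryPt θ)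

theorem boundaryPt_mem (hK : IsSymmConvexBody K) (θ : ℝ) : boundaryPt K θ ∈ K :=
  hK.mem_iff_gauge_le_one.2 (hK.gauge_boundaryPt θ).le

theorem boundaryPt_add_pi (hK : IsSymmConvexBody K) (θ : ℝ) :
    boundaryPt K (θ + π) = -boundaryPt K θ := by
  rw [boundaryPt, radialFn, unitVec_add_pi, hK.gauge_neg, smul_neg]; rfl

theorem boundaryPt_eq_of_mem_frontier (hK : IsSymmConvexBody K) (hx : x ∈ frontier K)
    {c : ℝ} (hc : 0 < c) (h : x = c • unitVec θ) : boundaryPt K θ = x := by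
  have hg := hK.gauge_eq_one_iff.2 hx
  rw [h, gauge_smul_of_nonneg hc.le, smul_eq_mul] at hg
  rw [boundaryPt, radialFn, eq_inv_of_mul_eq_one_right hg, inv_inv, h]

theorem exists_boundaryPt_eq (hK : IsSymmConvexBody K) (hx : x ∈ frontier K) (a : ℝ) :
    ∃ θ ∈ Ico a (a + 2 * π), boundaryPt K θ = x := by
  obtain ⟨θ, hθ, c, hc, h⟩ := exists_pos_smul_unitVec (hK.ne_zero_of_mem_frontier hx) a
  exact ⟨θ, hθ, hK.boundaryPt_eq_of_mem_frontier hx hc h⟩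

theorem eq_of_boundaryPt_eq (hK : IsSymmConvexBody K) (h : boundaryPt K s = boundaryPt K t)
    (hst : |s - t| < 2 * π) : s = t := by
  have h1 : radialFn K s * cos s = radialFn K t * cos t := congrArg Prod.fst h
  have h2 : radialFn K s * sin s = radialFn K t * sin t := congrArg Prod.snd h
  have hr : radialFn K s = radialFn K t := by
    have hsq : radialFn K s ^ 2 = radialFn K t ^ 2 := by
      linear_combination (radialFn K s * cos s + radialFn K t * cos t) * h1 +
        (radialFn K s * sin s + radialFn K t * sin t) * h2 +
        radialFn K t ^ 2 * sin_sq_add_cos_sq t - radialFn K s ^ 2 * sin_sq_add_cos_sq s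
    exact (sq_eq_sq₀ (hK.radialFn_pos s).le (hK.radialFn_pos t).le).1 hsq
  have hne := (hK.radialFn_pos t).ne'
  rw [hr] at h1 h2
  obtain ⟨k, hk⟩ := Real.Angle.angle_eq_iff_two_pi_dvd_sub.1 <|
    Real.Angle.cos_sin_inj (mul_left_cancel₀ hne h1) (mul_left_cancel₀ hne h2)
  rw [hk, abs_mul, abs_of_pos two_pi_pos, mul_lt_iff_lt_one_right two_pi_pos] at hst
  have hk0 : k = 0 := by
    rw [← Int.cast_abs, ← Int.cast_one, Int.cast_lt] at hst
    exact Int.abs_lt_one_iff.1 hst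
  rw [hk0, Int.cast_zero, mul_zero, sub_eq_zero] at hk
  exact hk

end IsSymmConvexBody

def AngleOrth (K : Set Plane) (a b : ℝ) : Prop := BOrth K (boundaryPt K a) (boundaryPt K b)

namespace IsSymmConvexBody

variable {K : Set Plane} {a b θ : ℝ}

theorem angleOrth_add_pi_left (hK : IsSymmConvexBody K) :
    AngleOrth K (a + π) b ↔ AngleOrth K a b := by
  unfold AngleOrth
  rw [hK.boundaryPt_add_pi]
  exact ⟨fun h ↦ by simpa using h.neg_left hK, fun h ↦ h.neg_left hK⟩

theorem angleOrth_add_pi_right (hK : IsSymmConvexBody K) :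
    AngleOrth K a (b + π) ↔ AngleOrth K a b := by
  unfold AngleOrth
  rw [hK.boundaryPt_add_pi]
  exact ⟨fun h ↦ by simpa using h.smul_right (-1), fun h ↦ by simpa using h.smul_right (-1)⟩

theorem angleOrth_sub_pi_left (hK : IsSymmConvexBody K) :
    AngleOrth K (a - π) b ↔ AngleOrth K a b := by
  rw [← hK.angleOrth_add_pi_left, sub_add_cancel]

theorem boundaryPt_mem_auerbach (hK : IsSymmConvexBody K) (h₁ : AngleOrth K θ b)
    (h₂ : AngleOrth K b θ) : boundaryPt K θ ∈ Auerbach K :=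
  ⟨hK.boundaryPt_mem_frontier θ, _, hK.boundaryPt_mem_frontier b, h₁, h₂⟩

theorem radialFn_mul_sin_le (hK : IsSymmConvexBody K) (hab : b ∈ Ioo a (a + π))
    (h : AngleOrth K a b) (t : ℝ) :
    radialFn K t * sin (b - t) ≤ radialFn K a * sin (b - a) := by
  have hpos : 0 < cross (boundaryPt K a) (boundaryPt K b) := by
    rw [cross_boundaryPt]
    exact mul_pos (mul_pos (hK.radialFn_pos a) (hK.radialFn_pos b))
      (sin_pos_of_pos_of_lt_pi (by linarith [hab.1]) (by linarith [hab.2]))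
  have hle := hK.cross_le_of_bOrth (hK.boundaryPt_mem_frontier a) hpos h (hK.boundaryPt_mem t)
  rw [cross_boundaryPt, cross_boundaryPt, mul_right_comm _ (radialFn K b),
    mul_right_comm (radialFn K a)] at hle
  exact le_of_mul_le_mul_right hle (hK.radialFn_pos b)

theorem not_angleOrth_of_nested (hK : IsSymmConvexBody K) {θ' β β' : ℝ} (h₁ : θ < θ')
    (h₂ : θ' < β') (h₃ : β' < β) (h₄ : β < θ + π) (ho : AngleOrth K θ β) :
    ¬ AngleOrth K θ' β' := by
  intro ho'
  have i₁ := hK.radialFn_mul_sin_le ⟨by linarith, h₄⟩ ho θ'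
  have i₂ := hK.radialFn_mul_sin_le ⟨h₂, by linarith⟩ ho' θ
  have hsin : ∀ x, 0 < x → x < π → 0 < sin x := fun x ↦ sin_pos_of_pos_of_lt_pi
  have hprod := mul_le_mul i₁ i₂
    (mul_pos (hK.radialFn_pos θ) (hsin _ (by linarith) (by linarith))).le
    (mul_pos (hK.radialFn_pos θ) (hsin _ (by linarith) (by linarith))).le
  have hid : sin (β - θ') * sin (β' - θ) =
      sin (β - θ) * sin (β' - θ') + sin (β - β') * sin (θ' - θ) := by
    simp only [sin_sub]; ring
  have hP := mul_pos (hK.radialFn_pos θ) (hK.radialFn_pos θ')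
  have hS := mul_pos (hsin (β - β') (by linarith) (by linarith))
    (hsin (θ' - θ) (by linarith) (by linarith))
  nlinarith [congrArg (radialFn K θ * radialFn K θ' * ·) hid, mul_pos hP hS]

theorem exists_angleOrth_right (hK : IsSymmConvexBody K) (θ : ℝ) :
    ∃ β ∈ Ioo θ (θ + π), AngleOrth K θ β := by
  obtain ⟨y, hxy, hK_le⟩ := hK.exists_cross_le_of_mem_frontier (hK.boundaryPt_mem_frontier θ)
  have hθy : 0 < cross (unitVec θ) y := by
    rw [boundaryPt, cross_smul_left] at hxy
    exact pos_of_mul_pos_right hxy (hK.radialFn_pos θ).le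
  obtain ⟨β, hβ, c, hc, rfl⟩ := exists_pos_smul_unitVec_of_cross_pos hθy
  refine ⟨β, hβ, ?_⟩
  have hb := (hK.mem_frontier_and_bOrth_of_cross_le (hK.boundaryPt_mem θ) hxy hK_le).2
  simpa [AngleOrth, boundaryPt, smul_smul, div_mul_cancel₀ _ hc.ne'] using
    hb.smul_right (radialFn K β / c)

theorem exists_angleOrth_left (hK : IsSymmConvexBody K) (θ : ℝ) :
    ∃ α ∈ Ioo (θ - π) θ, AngleOrth K α θ := by
  have hcont : Continuous fun z ↦ cross z (unitVec θ) := by unfold cross; fun_prop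
  obtain ⟨z, hz, hmax⟩ :=
    hK.isCompact.exists_isMaxOn ⟨0, interior_subset hK.zero_mem_interior⟩ hcont.continuousOn
  have hpos : 0 < cross z (unitVec θ) := by
    refine lt_of_lt_of_le ?_ (hmax (hK.boundaryPt_mem (θ - π / 2)))
    simpa [boundaryPt, cross_smul_left, cross_unitVec] using hK.radialFn_pos (θ - π / 2)
  obtain ⟨hzf, hb⟩ := hK.mem_frontier_and_bOrth_of_cross_le hz hpos fun w hw ↦ hmax hw
  have hz' : 0 < cross (unitVec (θ - π)) z := by
    rwa [unitVec_sub_pi, cross_neg_left, ← cross_anticomm]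
  obtain ⟨α, hα, c, hc, hzα⟩ := exists_pos_smul_unitVec_of_cross_pos hz'
  rw [sub_add_cancel] at hα
  refine ⟨α, hα, ?_⟩
  rw [AngleOrth, hK.boundaryPt_eq_of_mem_frontier hzf hc hzα, boundaryPt]
  exact hb.smul_right _

end IsSymmConvexBody

def arc (K : Set Plane) (a b : ℝ) : Set Plane := boundaryPt K '' Icc a b

theorem arc_union (K : Set Plane) {a b c : ℝ} (hac : a ≤ c) (hcb : c ≤ b) :
    arc K a c ∪ arc K c b = arc K a b := by
  rw [arc, arc, arc, ← image_union, Icc_union_Icc_eq_Icc hac hcb]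

namespace IsSymmConvexBody

variable {K : Set Plane} {a b c : ℝ}

theorem isCompact_arc (hK : IsSymmConvexBody K) (a b : ℝ) : IsCompact (arc K a b) :=
  isCompact_Icc.image hK.continuous_boundaryPt

theorem arc_subset_frontier (hK : IsSymmConvexBody K) (a b : ℝ) : arc K a b ⊆ frontier K :=
  image_subset_iff.2 fun θ _ ↦ hK.boundaryPt_mem_frontier θ

theorem neg_arc (hK : IsSymmConvexBody K) (a b : ℝ) : -arc K a b = arc K (a + π) (b + π) := by
  rw [arc, arc, ← image_add_const_Icc, image_image, ← image_neg_eq_neg, image_image]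
  simp_rw [hK.boundaryPt_add_pi]

theorem frontier_eq_arc (hK : IsSymmConvexBody K) (a : ℝ) : frontier K = arc K a (a + 2 * π) := by
  refine (hK.arc_subset_frontier _ _).antisymm' fun x hx ↦ ?_
  obtain ⟨θ, hθ, rfl⟩ := hK.exists_boundaryPt_eq hx a
  exact mem_image_of_mem _ (Ico_subset_Icc_self hθ)

theorem arc_inter_arc_subset (hK : IsSymmConvexBody K) (hba : b - a ≤ 2 * π) :
    arc K a c ∩ arc K c b ⊆ {boundaryPt K a, boundaryPt K c} := by
  rintro _ ⟨⟨s, hs, rfl⟩, t, ht, hts⟩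
  rcases (show t - s ≤ 2 * π by linarith [hs.1, ht.2]).lt_or_eq with hlt | heq
  · have hst := hK.eq_of_boundaryPt_eq hts (abs_lt.2 ⟨by linarith [hs.2, ht.1], hlt⟩)
    exact Or.inr (by rw [le_antisymm hs.2 (hst ▸ ht.1), mem_singleton_iff])
  · exact Or.inl (by rw [le_antisymm (by linarith [ht.2]) hs.1])

theorem isBArc_arc (hK : IsSymmConvexBody K) (hab : a ≤ b) (hba : b - a < π) :
    IsBArc K (arc K a b) (boundaryPt K a) (boundaryPt K b) := by
  have hinj : InjOn (boundaryPt K) (Icc a b) := fun s hs t ht hst ↦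
    hK.eq_of_boundaryPt_eq hst (abs_lt.2 ⟨by linarith [hs.1, ht.2], by linarith [hs.2, ht.1]⟩)
  refine ⟨hK.arc_subset_frontier a b, (hK.isCompact_arc a b).isClosed,
    isPreconnected_Icc.image _ hK.continuous_boundaryPt.continuousOn,
    mem_image_of_mem _ (left_mem_Icc.2 hab), mem_image_of_mem _ (right_mem_Icc.2 hab), ?_, ?_⟩
  · rintro _ ⟨s, hs, rfl⟩ ⟨t, ht, hts⟩
    rw [← hK.boundaryPt_add_pi] at hts
    have := hK.eq_of_boundaryPt_eq hts
      (abs_lt.2 ⟨by linarith [hs.2, ht.1], by linarith [hs.1, ht.2]⟩)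
    linarith [hs.1, ht.2]
  · -- `boundaryPt` embeds `Icc a b`, so `C` pulls back to a preconnected set containing `a`, `b`.
    intro C hC _ hCconn ha hb
    set e : Icc a b → Plane := fun t ↦ boundaryPt K t
    have he : Topology.IsInducing e :=
      ((hK.continuous_boundaryPt.comp continuous_subtype_val).isClosedEmbedding
        fun s t hst ↦ Subtype.ext (hinj s.2 t.2 hst)).isInducing
    have hCe : C ⊆ range e := fun x hx ↦ by
      obtain ⟨t, ht, rfl⟩ := hC hx
      exact ⟨⟨t, ht⟩, rfl⟩
    have hpre : IsPreconnected (Subtype.val '' (e ⁻¹' C)) := by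
      refine IsPreconnected.image ?_ _ continuous_subtype_val.continuousOn
      rwa [← he.isPreconnected_image, image_preimage_eq_of_subset hCe]
    refine hC.antisymm ?_
    rintro _ ⟨t, ht, rfl⟩
    obtain ⟨⟨t', _⟩, ht'C, rfl⟩ :=
      hpre.Icc_subset ⟨⟨a, left_mem_Icc.2 hab⟩, ha, rfl⟩ ⟨⟨b, right_mem_Icc.2 hab⟩, hb, rfl⟩ ht
    exact ht'C

end IsSymmConvexBody

namespace IsBMeasure

variable {K : Set Plane} {μ : Measure Plane}

theorem measure_frontier (hμ : IsBMeasure K μ) : μ (frontier K) = ENNReal.ofReal (2 * π) :=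
  hμ.1.1

theorem measure_compl_frontier (hμ : IsBMeasure K μ) : μ (frontier K)ᶜ = 0 := hμ.1.2.1

theorem measure_neg (hμ : IsBMeasure K μ) (X : Set Plane) : μ (-X) = μ X := hμ.1.2.2.1 X

theorem measure_singleton (hμ : IsBMeasure K μ) (x : Plane) : μ {x} = 0 := hμ.1.2.2.2 x

end IsBMeasure

namespace IsSymmConvexBody

variable {K : Set Plane} {μ : Measure Plane} {a b c : ℝ}

theorem measure_arc_add (hK : IsSymmConvexBody K) (hμ : IsBMeasure K μ) (hac : a ≤ c)
    (hcb : c ≤ b) (hba : b - a ≤ 2 * π) :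
    μ (arc K a b) = μ (arc K a c) + μ (arc K c b) := by
  rw [← arc_union K hac hcb]
  refine measure_union₀ (hK.isCompact_arc c b).isClosed.measurableSet.nullMeasurableSet ?_
  refine measure_mono_null (hK.arc_inter_arc_subset hba) ?_
  rw [insert_eq]
  exact measure_union_null (hμ.measure_singleton _) (hμ.measure_singleton _)

theorem measure_arc_add_pi (hK : IsSymmConvexBody K) (hμ : IsBMeasure K μ) (a b : ℝ) :
    μ (arc K (a + π) (b + π)) = μ (arc K a b) := by
  rw [← hK.neg_arc, hμ.measure_neg]

theorem measure_arc_pi (hK : IsSymmConvexBody K) (hμ : IsBMeasure K μ) (a : ℝ) :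
    μ (arc K a (a + π)) = ENNReal.ofReal π := by
  have h := hK.measure_arc_add hμ (a := a) (c := a + π) (b := a + 2 * π)
    (by linarith [pi_pos]) (by linarith [pi_pos]) (by linarith)
  rw [← hK.frontier_eq_arc, hμ.measure_frontier, show a + 2 * π = a + π + π by ring,
    hK.measure_arc_add_pi hμ, ← two_mul, ENNReal.ofReal_mul zero_le_two,
    ENNReal.ofReal_ofNat] at h
  exact ((ENNReal.mul_right_inj two_ne_zero ENNReal.ofNat_ne_top).1 h).symm

theorem measure_arc_of_angleOrth (hK : IsSymmConvexBody K) (hμ : IsBMeasure K μ)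
    (hab : b ∈ Ioo a (a + π)) (h : AngleOrth K a b) :
    μ (arc K a b) = ENNReal.ofReal (π / 2) :=
  hμ.2 _ _ _ (hK.isBArc_arc hab.1.le (by linarith [hab.2])) h

theorem measure_arc_of_angleOrth_chain (hK : IsSymmConvexBody K) (hμ : IsBMeasure K μ)
    (hab : b ∈ Ioo a (a + π)) (hbc : c ∈ Ioo b (b + π)) (h₁ : AngleOrth K a b)
    (h₂ : AngleOrth K b c) : μ (arc K a c) = ENNReal.ofReal π := by
  rw [hK.measure_arc_add hμ hab.1.le hbc.1.le (by linarith [hab.2, hbc.2]),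
    hK.measure_arc_of_angleOrth hμ hab h₁, hK.measure_arc_of_angleOrth hμ hbc h₂,
    ← ENNReal.ofReal_add (by positivity) (by positivity), add_halves]

theorem measure_arc_eq_zero_of_le (hK : IsSymmConvexBody K) (hμ : IsBMeasure K μ)
    (h : μ (arc K a c) = ENNReal.ofReal π) (hac : a ≤ c) (hc : c ≤ a + π) :
    μ (arc K c (a + π)) = 0 := by
  have hsplit := hK.measure_arc_add hμ hac hc (by linarith [pi_pos])
  rw [hK.measure_arc_pi hμ, h] at hsplit
  exact (ENNReal.add_right_inj ENNReal.ofReal_ne_top).1 (hsplit.symm.trans (add_zero _).symm)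

theorem measure_arc_eq_zero_of_ge (hK : IsSymmConvexBody K) (hμ : IsBMeasure K μ)
    (h : μ (arc K a c) = ENNReal.ofReal π) (hc : a + π ≤ c) (hca : c ≤ a + 2 * π) :
    μ (arc K (a + π) c) = 0 := by
  have hsplit := hK.measure_arc_add hμ (a := a) (by linarith [pi_pos]) hc (by linarith)
  rw [hK.measure_arc_pi hμ, h] at hsplit
  exact (ENNReal.add_right_inj ENNReal.ofReal_ne_top).1 (hsplit.symm.trans (add_zero _).symm)

end IsSymmConvexBody

def LeftNull (K : Set Plane) (μ : Measure Plane) (θ : ℝ) : Prop :=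
  ∃ l ∈ Ioo (θ - π) θ, μ (arc K l θ) = 0

def RightNull (K : Set Plane) (μ : Measure Plane) (θ : ℝ) : Prop :=
  ∃ r ∈ Ioo θ (θ + π), μ (arc K θ r) = 0

namespace IsSymmConvexBody

variable {K : Set Plane} {μ : Measure Plane} {θ α β γ δ : ℝ}

theorem leftNull_of_angleOrth_chain_right (hK : IsSymmConvexBody K) (hμ : IsBMeasure K μ)
    (hβ : β ∈ Ioo θ (θ + π)) (hγ : γ ∈ Ioo β (β + π)) (h₁ : AngleOrth K θ β)
    (h₂ : AngleOrth K β γ) (hγθ : γ < θ + π) : LeftNull K μ θ := by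
  have hπ := hK.measure_arc_of_angleOrth_chain hμ hβ hγ h₁ h₂
  refine ⟨γ - π, ⟨by linarith [hβ.1, hγ.1], by linarith⟩, ?_⟩
  rw [← hK.measure_arc_add_pi hμ, sub_add_cancel]
  exact hK.measure_arc_eq_zero_of_le hμ hπ (by linarith [hβ.1, hγ.1]) hγθ.le

theorem rightNull_of_angleOrth_chain_right (hK : IsSymmConvexBody K) (hμ : IsBMeasure K μ)
    (hβ : β ∈ Ioo θ (θ + π)) (hγ : γ ∈ Ioo β (β + π)) (h₁ : AngleOrth K θ β)
    (h₂ : AngleOrth K β γ) (hγθ : θ + π < γ) : RightNull K μ θ := by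
  have hπ := hK.measure_arc_of_angleOrth_chain hμ hβ hγ h₁ h₂
  refine ⟨γ - π, ⟨by linarith, by linarith [hβ.2, hγ.2]⟩, ?_⟩
  rw [← hK.measure_arc_add_pi hμ, sub_add_cancel]
  exact hK.measure_arc_eq_zero_of_ge hμ hπ hγθ.le (by linarith [hβ.2, hγ.2])

theorem rightNull_of_angleOrth_chain_left (hK : IsSymmConvexBody K) (hμ : IsBMeasure K μ)
    (hα : α ∈ Ioo (θ - π) θ) (hδ : δ ∈ Ioo (α - π) α) (h₁ : AngleOrth K α θ)
    (h₂ : AngleOrth K δ α) (hδθ : θ - π < δ) : RightNull K μ θ := by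
  have hπ := hK.measure_arc_of_angleOrth_chain hμ (a := δ) (c := θ)
    ⟨hδ.2, by linarith [hδ.1]⟩ ⟨hα.2, by linarith [hα.1]⟩ h₂ h₁
  exact ⟨δ + π, ⟨by linarith, by linarith [hα.2, hδ.2]⟩,
    hK.measure_arc_eq_zero_of_le hμ hπ (by linarith [hα.2, hδ.2]) (by linarith)⟩

theorem leftNull_of_angleOrth_chain_left (hK : IsSymmConvexBody K) (hμ : IsBMeasure K μ)
    (hα : α ∈ Ioo (θ - π) θ) (hδ : δ ∈ Ioo (α - π) α) (h₁ : AngleOrth K α θ)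
    (h₂ : AngleOrth K δ α) (hδθ : δ < θ - π) : LeftNull K μ θ := by
  have hπ := hK.measure_arc_of_angleOrth_chain hμ (a := δ) (c := θ)
    ⟨hδ.2, by linarith [hδ.1]⟩ ⟨hα.2, by linarith [hα.1]⟩ h₂ h₁
  exact ⟨δ + π, ⟨by linarith [hα.1, hδ.1], by linarith⟩,
    hK.measure_arc_eq_zero_of_ge hμ hπ (by linarith) (by linarith [hα.1, hδ.1])⟩

theorem boundaryPt_mem_auerbach_of_short_chains (hK : IsSymmConvexBody K)
    (hβ : β ∈ Ioo θ (θ + π)) (hγ : γ ∈ Ioo β (β + π)) (h₁ : AngleOrth K θ β)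
    (h₂ : AngleOrth K β γ) (hγθ : γ < θ + π) (hα : α ∈ Ioo (θ - π) θ)
    (hδ : δ ∈ Ioo (α - π) α) (h₃ : AngleOrth K α θ) (h₄ : AngleOrth K δ α) (hδθ : δ < θ - π) :
    boundaryPt K θ ∈ Auerbach K := by
  rcases lt_trichotomy β (α + π) with hlt | rfl | hgt
  · exact absurd h₁ <| hK.not_angleOrth_of_nested (by linarith) hβ.1 hlt
      (by linarith [hδ.1]) (hK.angleOrth_add_pi_left.2 (hK.angleOrth_add_pi_right.2 h₄))
  · exact hK.boundaryPt_mem_auerbach h₁ (hK.angleOrth_add_pi_left.2 h₃)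
  · exact absurd h₂ <| hK.not_angleOrth_of_nested hgt hγ.1 hγθ
      (by linarith [hα.1]) (hK.angleOrth_add_pi_left.2 (hK.angleOrth_add_pi_right.2 h₃))

theorem boundaryPt_mem_auerbach_of_long_chains (hK : IsSymmConvexBody K)
    (hβ : β ∈ Ioo θ (θ + π)) (hγ : γ ∈ Ioo β (β + π)) (h₁ : AngleOrth K θ β)
    (h₂ : AngleOrth K β γ) (hγθ : θ + π < γ) (hα : α ∈ Ioo (θ - π) θ)
    (hδ : δ ∈ Ioo (α - π) α) (h₃ : AngleOrth K α θ) (h₄ : AngleOrth K δ α) (hδθ : θ - π < δ) :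
    boundaryPt K θ ∈ Auerbach K := by
  rcases lt_trichotomy β (α + π) with hlt | rfl | hgt
  · exact absurd h₃ <| (hK.angleOrth_add_pi_left.trans hK.angleOrth_add_pi_right).not.1 <|
      hK.not_angleOrth_of_nested hlt (by linarith [hα.2]) hγθ hγ.2 h₂
  · exact hK.boundaryPt_mem_auerbach h₁ (hK.angleOrth_add_pi_left.2 h₃)
  · exact absurd h₄ <| (hK.angleOrth_add_pi_left.trans hK.angleOrth_add_pi_right).not.1 <|
      hK.not_angleOrth_of_nested (by linarith) (by linarith [hδ.2]) hgt hβ.2 h₁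

theorem leftNull_and_rightNull (hK : IsSymmConvexBody K) (hμ : IsBMeasure K μ)
    (hθ : boundaryPt K θ ∉ Auerbach K) : LeftNull K μ θ ∧ RightNull K μ θ := by
  obtain ⟨β, hβ, h₁⟩ := hK.exists_angleOrth_right θ
  obtain ⟨γ, hγ, h₂⟩ := hK.exists_angleOrth_right β
  obtain ⟨α, hα, h₃⟩ := hK.exists_angleOrth_left θ
  obtain ⟨δ, hδ, h₄⟩ := hK.exists_angleOrth_left α
  have hγθ : γ ≠ θ + π := by
    rintro rfl
    exact hθ (hK.boundaryPt_mem_auerbach h₁ (hK.angleOrth_add_pi_right.1 h₂))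
  have hδθ : δ ≠ θ - π := by
    rintro rfl
    exact hθ (hK.boundaryPt_mem_auerbach (hK.angleOrth_sub_pi_left.1 h₄) h₃)
  rcases hγθ.lt_or_gt with hγθ | hγθ <;> rcases hδθ.lt_or_gt with hδθ | hδθ
  · exact absurd (hK.boundaryPt_mem_auerbach_of_short_chains hβ hγ h₁ h₂ hγθ hα hδ h₃ h₄ hδθ) hθ
  · exact ⟨hK.leftNull_of_angleOrth_chain_right hμ hβ hγ h₁ h₂ hγθ,
      hK.rightNull_of_angleOrth_chain_left hμ hα hδ h₃ h₄ hδθ⟩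
  · exact ⟨hK.leftNull_of_angleOrth_chain_left hμ hα hδ h₃ h₄ hδθ,
      hK.rightNull_of_angleOrth_chain_right hμ hβ hγ h₁ h₂ hγθ⟩
  · exact absurd (hK.boundaryPt_mem_auerbach_of_long_chains hβ hγ h₁ h₂ hγθ hα hδ h₃ h₄ hδθ) hθ

theorem boundaryPt_notMem_msupp (hK : IsSymmConvexBody K) (hμ : IsBMeasure K μ) {l r : ℝ}
    (hl : l < θ) (hr : θ < r) (hrl : r < l + 2 * π) (h0 : μ (arc K l r) = 0) :
    boundaryPt K θ ∉ msupp μ := by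
  intro hθ
  have hθU : boundaryPt K θ ∈ (arc K r (l + 2 * π))ᶜ := by
    rintro ⟨s, hs, hsθ⟩
    have := hK.eq_of_boundaryPt_eq hsθ (abs_lt.2 ⟨by linarith [hs.1], by linarith [hs.2]⟩)
    linarith [hs.1]
  have hnull : μ (arc K r (l + 2 * π))ᶜ = 0 := by
    refine measure_mono_null (fun x hx ↦ ?_) (measure_union_null hμ.measure_compl_frontier h0)
    by_cases hxK : x ∈ frontier K
    · rw [hK.frontier_eq_arc l, ← arc_union K (c := r) (by linarith) (by linarith)] at hxK
      exact Or.inr (hxK.resolve_right hx)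
    · exact Or.inl hxK
  exact (hθ _ (hK.isCompact_arc _ _).isClosed.isOpen_compl hθU).ne' hnull

end IsSymmConvexBody

/-- The support of a B-measure is contained in the set of Auerbach points. -/
theorem stmt_2 (K : Set Plane) (hK : IsSymmConvexBody K)
    (μ : Measure Plane) (hμ : IsBMeasure K μ) :
    msupp μ ⊆ Auerbach K := by
  intro x hx
  have hxK : x ∈ frontier K := by
    by_contra hxK
    exact (hx _ isClosed_frontier.isOpen_compl hxK).ne' hμ.measure_compl_frontier
  obtain ⟨θ, -, rfl⟩ := hK.exists_boundaryPt_eq hxK 0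
  by_contra hA
  obtain ⟨⟨l, hl, hlθ⟩, r, hr, hθr⟩ := hK.leftNull_and_rightNull hμ hA
  refine hK.boundaryPt_notMem_msupp hμ hl.2 hr.1 (by linarith [hl.1, hr.2]) ?_ hx
  rw [← arc_union K hl.2.le hr.1.le]
  exact measure_union_null hlθ hθr
end

section
/- Let H ⊆ [0,1] be closed with 0, 1 ∈ H, perfect, nonempty, and of Lebesgue measure zero. Then there is a continuous, non-decreasing function f : ℝ → ℝ with f = 0 on (−∞, 0], f = 1 on [1, ∞), f locally constant on ℝ \ H, and f not constant on any open interval meeting H. -/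
/-!
Every relatively open piece of a perfect set in a Polish space contains a Cantor set, hence
carries an atomless probability measure (the image of Lebesgue measure on `[0, 1]` under a Borel
injection). A countable convex combination of such measures, one for each basic open set meeting
`H`, is an atomless probability measure `μ` whose support is exactly `H`. Its distribution
function is the required `f`: continuous because `μ` has no atoms, constant on intervals that
`μ` does not charge, and strictly increasing across every interval meeting the support.
-/

open Set MeasureTheory Pointwise

open Function ProbabilityTheory TopologicalSpace

theorem MeasureTheory.Measure.nullSingletonClass_map_of_injective {α β : Type*}
    [MeasurableSpace α] [MeasurableSpace β] [MeasurableSingletonClass α] {g : β → α}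
    (hg : Measurable g) (hinj : Injective g) (ν : Measure β) [NullSingletonClass ν] :
    NullSingletonClass (ν.map g) :=
  ⟨fun x => by
    rw [Measure.map_apply hg (measurableSet_singleton x)]
    exact (subsingleton_singleton.preimage hinj).measure_zero ν⟩

section PerfectSet

variable {α : Type*} [TopologicalSpace α]

theorem Perfect.exists_measurable_injective_real [PolishSpace α] [MeasurableSpace α]
    [BorelSpace α] {C : Set α} (hC : Perfect C) (hne : C.Nonempty) :
    ∃ g : ℝ → α, Measurable g ∧ Injective g ∧ range g ⊆ C := by
  let := upgradeIsCompletelyMetrizable α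
  obtain ⟨f, hfC, hf, hinj⟩ := hC.exists_nat_bool_injection hne
  let e : ℝ ≃ᵐ (ℕ → Bool) :=
    PolishSpace.measurableEquivNatBoolOfNotCountable not_countable
  exact ⟨f ∘ e, hf.measurable.comp e.measurable, hinj.comp e.injective,
    (range_comp_subset_range _ _).trans hfC⟩

theorem Perfect.exists_isProbabilityMeasure_nullSingletonClass [PolishSpace α]
    [MeasurableSpace α] [BorelSpace α] {C : Set α} (hC : Perfect C) (hne : C.Nonempty) :
    ∃ ν : Measure α, IsProbabilityMeasure ν ∧ NullSingletonClass ν ∧ ν Cᶜ = 0 := by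
  obtain ⟨g, hg, hinj, hgC⟩ := hC.exists_measurable_injective_real hne
  let ν₀ := volume.restrict (Icc (0 : ℝ) 1)
  have : IsProbabilityMeasure ν₀ := ⟨by simp [ν₀]⟩
  refine ⟨ν₀.map g, Measure.isProbabilityMeasure_map hg.aemeasurable,
    Measure.nullSingletonClass_map_of_injective hg hinj ν₀, ?_⟩
  rw [Measure.map_apply hg hC.closed.measurableSet.compl, preimage_compl,
    preimage_eq_univ_iff.mpr hgC, compl_univ, measure_empty]

theorem Perfect.exists_perfect_nonempty_subset_inter [RegularSpace α] {H U : Set α}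
    (hH : Perfect H) (hU : IsOpen U) (hne : (U ∩ H).Nonempty) :
    ∃ C, Perfect C ∧ C.Nonempty ∧ C ⊆ U ∩ H := by
  obtain ⟨x, hxU, hxH⟩ := hne
  obtain ⟨t, ht, htc, htU⟩ := exists_mem_nhds_isClosed_subset (hU.mem_nhds hxU)
  obtain ⟨hperf, hCne⟩ :=
    hH.closure_nhds_inter x hxH (mem_interior_iff_mem_nhds.mpr ht) isOpen_interior
  have hsub : interior t ∩ H ⊆ t ∩ H := inter_subset_inter_left _ interior_subset
  exact ⟨_, hperf, hCne,
    (closure_minimal hsub (htc.inter hH.closed)).trans (inter_subset_inter_left _ htU)⟩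

theorem NNReal.exists_pos_hasSum_one (ι : Type*) [Countable ι] [Nonempty ι] :
    ∃ w : ι → NNReal, (∀ i, 0 < w i) ∧ HasSum w 1 := by
  obtain ⟨ε, hε, c, hc, -⟩ := NNReal.exists_pos_sum_of_countable one_ne_zero ι
  have hc0 : c ≠ 0 :=
    (hc.tsum_eq ▸ NNReal.tsum_pos hc.summable _ (hε (Classical.arbitrary ι))).ne'
  exact ⟨fun i => ε i / c, fun i => div_pos (hε i) (pos_iff_ne_zero.mpr hc0), by
    simpa [div_self hc0] using hc.div_const c⟩

theorem Perfect.exists_isProbabilityMeasure_support_eq [PolishSpace α] [MeasurableSpace α]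
    [BorelSpace α] {H : Set α} (hH : Perfect H) (hne : H.Nonempty) :
    ∃ μ : Measure α, IsProbabilityMeasure μ ∧ NullSingletonClass μ ∧ μ.support = H := by
  have hB := isBasis_countableBasis α
  let ι := {U : Set α // U ∈ countableBasis α ∧ (U ∩ H).Nonempty}
  have : Countable ι := ((countable_countableBasis α).mono fun _ h => h.1).to_subtype
  have : Nonempty ι := by
    obtain ⟨x, hx⟩ := hne
    obtain ⟨U, hUB, hxU, -⟩ := hB.exists_subset_of_mem_open (mem_univ x) isOpen_univ
    exact ⟨⟨U, hUB, x, hxU, hx⟩⟩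
  have hν : ∀ i : ι, ∃ ν : Measure α,
      IsProbabilityMeasure ν ∧ NullSingletonClass ν ∧ ν (i.1 ∩ H)ᶜ = 0 := by
    intro i
    obtain ⟨C, hC, hCne, hCUH⟩ :=
      hH.exists_perfect_nonempty_subset_inter (hB.isOpen i.2.1) i.2.2
    obtain ⟨ν, hνprob, hνatom, hνC⟩ :=
      hC.exists_isProbabilityMeasure_nullSingletonClass hCne
    exact ⟨ν, hνprob, hνatom, measure_mono_null (compl_subset_compl.mpr hCUH) hνC⟩
  choose ν hνprob hνatom hνsupp using hν
  obtain ⟨w, hwpos, hw⟩ := NNReal.exists_pos_hasSum_one ι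
  let μ := Measure.sum fun i => (w i : ENNReal) • ν i
  have hμ : ∀ s, MeasurableSet s → μ s = ∑' i, (w i : ENNReal) * ν i s := fun s hs => by
    simp [μ, Measure.sum_apply _ hs]
  refine ⟨μ, ⟨?_⟩, ⟨fun x => ?_⟩, subset_antisymm ?_ fun x hx => ?_⟩
  · simp [hμ _ MeasurableSet.univ, ← ENNReal.coe_tsum hw.summable, hw.tsum_eq]
  · simp [hμ _ (measurableSet_singleton x)]
  · refine Measure.support_subset_of_isClosed hH.closed (mem_ae_iff.mpr ?_)
    rw [hμ _ hH.closed.measurableSet.compl, ENNReal.tsum_eq_zero]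
    intro i
    rw [measure_mono_null (compl_subset_compl.mpr inter_subset_right) (hνsupp i), mul_zero]
  · refine (Measure.mem_support_iff_forall x).mpr fun V hV => ?_
    obtain ⟨U, hUB, hxU, hUV⟩ := hB.mem_nhds_iff.mp hV
    let i : ι := ⟨U, hUB, x, hxU, hx⟩
    have hνU : ν i U = 1 := (prob_compl_eq_zero_iff (hB.isOpen hUB).measurableSet).mp
      (measure_mono_null (compl_subset_compl.mpr inter_subset_left) (hνsupp i))
    calc (0 : ENNReal) < (w i : ENNReal) • ν i U := by simp [hνU, hwpos i]
      _ ≤ μ U := Measure.le_sum _ i U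
      _ ≤ μ V := measure_mono hUV

end PerfectSet

namespace StieltjesFunction

variable (f : StieltjesFunction ℝ)

theorem continuous_of_measure_singleton (h : ∀ x, f.measure {x} = 0) : Continuous f := by
  refine continuous_iff_continuousAt.mpr fun x => ?_
  rw [f.mono.continuousAt_iff_leftLim_eq_rightLim, f.rightLim_eq]
  have := f.measure_singleton x
  rw [h x, eq_comm, ENNReal.ofReal_eq_zero, sub_nonpos] at this
  exact le_antisymm (f.mono.leftLim_le le_rfl) this

theorem apply_eq_apply_of_measure_eq_zero {S : Set ℝ} (hS : S.OrdConnected)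
    (h : f.measure S = 0) {x y : ℝ} (hx : x ∈ S) (hy : y ∈ S) : f x = f y := by
  wlog hxy : x ≤ y generalizing x y
  · exact (this hy hx (le_of_not_ge hxy)).symm
  have := measure_mono_null (Ioc_subset_Icc_self.trans (hS.out hx hy)) h
  rw [f.measure_Ioc, ENNReal.ofReal_eq_zero, sub_nonpos] at this
  exact le_antisymm (f.mono hxy) this

theorem apply_lt_apply_of_measure_Ioc_pos {a b : ℝ} (h : 0 < f.measure (Ioc a b)) :
    f a < f b := by
  rwa [f.measure_Ioc, ENNReal.ofReal_pos, sub_pos] at h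

end StieltjesFunction

theorem stmt_15_general (H : Set ℝ) (hH1 : H ⊆ Icc (0:ℝ) 1) (hc : IsClosed H)
    (h0 : (0:ℝ) ∈ H) (hperf : Perfect H) :
    ∃ f : ℝ → ℝ, Continuous f ∧ Monotone f ∧
      (∀ x : ℝ, x ≤ 0 → f x = 0) ∧ (∀ x : ℝ, 1 ≤ x → f x = 1) ∧
      (∀ x ∉ H, ∃ U : Set ℝ, IsOpen U ∧ x ∈ U ∧ ∀ y ∈ U, f y = f x) ∧
      (∀ a b : ℝ, a < b → (Ioo a b ∩ H).Nonempty →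
        ∃ u ∈ Ioo a b, ∃ v ∈ Ioo a b, f u ≠ f v) := by
  obtain ⟨μ, hμ, hμatom, hsupp⟩ := hperf.exists_isProbabilityMeasure_support_eq ⟨0, h0⟩
  have hF : (cdf μ).measure = μ := measure_cdf μ
  have hHc : μ Hᶜ = 0 := hsupp ▸ Measure.measure_compl_support
  refine ⟨cdf μ, (cdf μ).continuous_of_measure_singleton (by simp [hF]), monotone_cdf μ,
    fun x hx => ?_, fun x hx => ?_, fun x hx => ?_, fun a b _ ⟨t, ht, htH⟩ => ?_⟩
  · have : Iic x ⊆ Hᶜ ∪ {0} := fun y hy => or_iff_not_imp_left.mpr fun hyH =>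
      le_antisymm (hy.trans hx) (hH1 (not_not.mp hyH)).1
    rw [cdf_eq_real, measureReal_def,
      measure_mono_null this (measure_union_null hHc (measure_singleton 0)), ENNReal.toReal_zero]
  · have : μ (Iic x) = 1 := (prob_compl_eq_zero_iff measurableSet_Iic).mp <|
      measure_mono_null (fun y hy hyH => hy ((hH1 hyH).2.trans hx)) hHc
    rw [cdf_eq_real, measureReal_def, this, ENNReal.toReal_one]
  · obtain ⟨l, u, hxlu, hlu⟩ := mem_nhds_iff_exists_Ioo_subset.mp (hc.isOpen_compl.mem_nhds hx)
    exact ⟨Ioo l u, isOpen_Ioo, hxlu, fun y hy => (cdf μ).apply_eq_apply_of_measure_eq_zero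
      ordConnected_Ioo (by rw [hF]; exact measure_mono_null hlu hHc) hy hxlu⟩
  · obtain ⟨u, hau, hut⟩ := exists_between ht.1
    obtain ⟨v, htv, hvb⟩ := exists_between ht.2
    refine ⟨u, ⟨hau, hut.trans (htv.trans hvb)⟩, v, ⟨(hau.trans hut).trans htv, hvb⟩,
      ((cdf μ).apply_lt_apply_of_measure_Ioc_pos ?_).ne⟩
    rw [hF]
    exact (Measure.mem_support_iff_forall t).mp (hsupp ▸ htH) _ (Ioc_mem_nhds hut htv)

/-- The Cantor-like distribution function for a perfect null set `H`
containing `0` and `1`. -/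
theorem stmt_15 (H : Set ℝ) (hH1 : H ⊆ Icc (0:ℝ) 1) (hc : IsClosed H)
    (h0 : (0:ℝ) ∈ H) (h1 : (1:ℝ) ∈ H) (hperf : Perfect H)
    (hnull : volume H = 0) :
    ∃ f : ℝ → ℝ, Continuous f ∧ Monotone f ∧
      (∀ x : ℝ, x ≤ 0 → f x = 0) ∧ (∀ x : ℝ, 1 ≤ x → f x = 1) ∧
      (∀ x ∉ H, ∃ U : Set ℝ, IsOpen U ∧ x ∈ U ∧ ∀ y ∈ U, f y = f x) ∧
      (∀ a b : ℝ, a < b → (Ioo a b ∩ H).Nonempty →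
        ∃ u ∈ Ioo a b, ∃ v ∈ Ioo a b, f u ≠ f v) :=
  stmt_15_general H hH1 hc h0 hperf
end
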